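/- arXiv:1711.07021 — 2 statements merged into one kernel-verified Lean document; each statement's English description precedes it below -/
import Mathlib

section
/- Among all trees on n ≥ 4 vertices, the path P_n has the maximum total-eccentricity index; i.e., for every tree T on n vertices, τ(T) ≤ τ(P_n). -/
open SimpleGraph Finset

noncomputable def ecc {V : Type*} [Fintype V] (G : SimpleGraph V) (v : V) : ℕ :=
  Finset.univ.sup (G.dist v)

noncomputable def tau {V : Type*} [Fintype V] (G : SimpleGraph V) : ℕ :=
  ∑ v, ecc G v

/-!
Let `a, b` be a diametral pair of the tree `T`, `d = diam T`, and `a = v₀, …, v_d = b` the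
geodesic between them. Every vertex `u` has `vᵢ` on its geodesic to `a` or on its geodesic to
`b`, and both have length at most `d`, so `ecc vᵢ ≤ max i (d - i)`; all other vertices have
eccentricity at most `d`. In `P_n` the `i`-th vertex has eccentricity at least
`max i (n - 1 - i)`, which dominates `max i (d - i)` for `i ≤ d` and is at least `d` for the
remaining `n - d - 1` vertices.
-/

section Eccentricity

variable {V : Type*} [Fintype V] {G : SimpleGraph V}

lemma dist_le_ecc (G : SimpleGraph V) (v u : V) : G.dist v u ≤ ecc G v :=
  Finset.le_sup (Finset.mem_univ u)

lemma ecc_le_iff {v : V} {m : ℕ} : ecc G v ≤ m ↔ ∀ u, G.dist v u ≤ m := by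
  simp [ecc]

end Eccentricity

namespace SimpleGraph

variable {V : Type*} {G : SimpleGraph V}

lemma Walk.dist_add_dist_eq_of_mem_support {u v w : V} {p : G.Walk u w}
    (hp : p.length = G.dist u w) (hv : v ∈ p.support) :
    G.dist u v + G.dist v w = G.dist u w := by
  classical
  rw [← length_eq_dist_of_subwalk hp (p.isSubwalk_takeUntil hv),
    ← length_eq_dist_of_subwalk hp (p.isSubwalk_dropUntil hv), ← hp, ← length_append,
    take_spec]

lemma Walk.dist_getVert_of_length_eq_dist {u w : V} {p : G.Walk u w}
    (hp : p.length = G.dist u w) (i : ℕ) (hi : i ≤ p.length) :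
    G.dist u (p.getVert i) = i ∧ G.dist (p.getVert i) w = p.length - i := by
  rw [← length_eq_dist_of_subwalk hp (p.isSubwalk_take i),
    ← length_eq_dist_of_subwalk hp (p.isSubwalk_drop i)]
  simp [hi]

lemma IsTree.dist_add_dist_eq_or (hG : G.IsTree) {a b v : V} {p : G.Walk a b} (hp : p.IsPath)
    (hv : v ∈ p.support) (u : V) :
    G.dist u v + G.dist v a = G.dist u a ∨ G.dist u v + G.dist v b = G.dist u b := by
  classical
  obtain ⟨q, hq⟩ := hG.connected.exists_walk_length_eq_dist u a
  obtain ⟨r, hr⟩ := hG.connected.exists_walk_length_eq_dist u b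
  have hqr : (q.reverse.append r).bypass = p :=
    (hG.existsUnique_path a b).unique (Walk.bypass_isPath _) hp
  have hv' := Walk.support_bypass_subset_support _ (hqr ▸ hv)
  rw [Walk.mem_support_append_iff, Walk.support_reverse, List.mem_reverse] at hv'
  exact hv'.imp (Walk.dist_add_dist_eq_of_mem_support hq) (Walk.dist_add_dist_eq_of_mem_support hr)

lemma Connected.dist_le_diam [Finite V] (hG : G.Connected) (u v : V) : G.dist u v ≤ G.diam :=
  have := hG.nonempty
  SimpleGraph.dist_le_diam (connected_iff_ediam_ne_top.mp hG)

lemma Connected.diam_lt_card [Fintype V] (hG : G.Connected) : G.diam < Fintype.card V := by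
  have := hG.nonempty
  obtain ⟨a, b, hab⟩ := G.exists_dist_eq_diam
  obtain ⟨p, hp, hpl⟩ := hG.exists_path_of_dist a b
  exact hab ▸ hpl ▸ hp.length_lt

lemma Walk.val_le_val_add_length_of_pathGraph {n : ℕ} {x y : Fin n}
    (w : (pathGraph n).Walk x y) : (x : ℕ) ≤ y + w.length := by
  induction w with
  | nil => simp
  | cons h _ ih =>
    rw [pathGraph_adj] at h
    rw [Walk.length_cons]
    omega

lemma val_le_val_add_dist_pathGraph {n : ℕ} (x y : Fin n) :
    (x : ℕ) ≤ y + (pathGraph n).dist x y := by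
  obtain ⟨w, hw⟩ := (pathGraph_preconnected n x y).exists_walk_length_eq_dist
  exact hw ▸ w.val_le_val_add_length_of_pathGraph

section Finite

variable [Fintype V]

lemma IsTree.ecc_getVert_le (hG : G.IsTree) {a b : V} {p : G.Walk a b}
    (hp : p.length = G.dist a b) (hab : G.dist a b = G.diam) {i : ℕ} (hi : i ≤ G.diam) :
    ecc G (p.getVert i) ≤ max i (G.diam - i) := by
  have hdiam := hG.connected.dist_le_diam
  obtain ⟨hai, hib⟩ := p.dist_getVert_of_length_eq_dist hp i (by omega)
  refine ecc_le_iff.mpr fun u => ?_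
  rw [dist_comm] at hai ⊢
  rcases hG.dist_add_dist_eq_or (p.isPath_of_length_eq_dist hp) (p.getVert_mem_support i) u
    with h | h
  · have := hdiam u a
    omega
  · have := hdiam u b
    omega

lemma IsTree.tau_le (hG : G.IsTree) :
    tau G ≤ ∑ i ∈ range (G.diam + 1), max i (G.diam - i) +
      (Fintype.card V - (G.diam + 1)) * G.diam := by
  classical
  have := hG.connected.nonempty
  obtain ⟨a, b, hab⟩ := G.exists_dist_eq_diam
  obtain ⟨p, hp⟩ := hG.connected.exists_walk_length_eq_dist a b
  have hdist (i : ℕ) (hi : i ∈ range (G.diam + 1)) : G.dist a (p.getVert i) = i :=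
    (p.dist_getVert_of_length_eq_dist hp i (by rw [hp, hab]; exact mem_range_succ_iff.mp hi)).1
  have hinj : Set.InjOn p.getVert (range (G.diam + 1)) := fun i hi j hj hij => by
    rw [← hdist i hi, ← hdist j hj, hij]
  set S := (range (G.diam + 1)).image p.getVert
  have hS : ∑ v ∈ S, ecc G v ≤ ∑ i ∈ range (G.diam + 1), max i (G.diam - i) := by
    rw [sum_image hinj]
    exact sum_le_sum fun i hi => hG.ecc_getVert_le hp hab (mem_range_succ_iff.mp hi)
  have hSc : ∑ v ∈ Sᶜ, ecc G v ≤ (Fintype.card V - (G.diam + 1)) * G.diam := by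
    rw [← card_range (G.diam + 1), ← card_image_of_injOn hinj, ← card_compl, ← smul_eq_mul]
    exact sum_le_card_nsmul _ _ _ fun v _ => ecc_le_iff.mpr (hG.connected.dist_le_diam v)
  rw [tau, ← sum_add_sum_compl S]
  exact add_le_add hS hSc

end Finite

end SimpleGraph

lemma max_le_ecc_pathGraph {n : ℕ} (i : Fin n) :
    max (i : ℕ) (n - 1 - i) ≤ ecc (pathGraph n) i := by
  let first : Fin n := ⟨0, i.pos⟩
  let last : Fin n := ⟨n - 1, Nat.sub_one_lt_of_lt i.isLt⟩
  have h₀ := val_le_val_add_dist_pathGraph i first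
  have h₁ := val_le_val_add_dist_pathGraph last i
  rw [dist_comm] at h₁
  have := dist_le_ecc (pathGraph n) i first
  have := dist_le_ecc (pathGraph n) i last
  simp only [first, last] at *
  omega

lemma sum_max_le_tau_pathGraph (n : ℕ) :
    ∑ i ∈ range n, max i (n - 1 - i) ≤ tau (pathGraph n) := by
  rw [tau, ← Fin.sum_univ_eq_sum_range]
  exact sum_le_sum fun i _ => max_le_ecc_pathGraph i

lemma sum_range_max_add_mul_le {n d : ℕ} (h : d + 1 ≤ n) :
    ∑ i ∈ range (d + 1), max i (d - i) + (n - (d + 1)) * d ≤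
      ∑ i ∈ range n, max i (n - 1 - i) := by
  rw [← sum_range_add_sum_Ico _ h]
  gcongr with i hi
  · omega
  · rw [← Nat.card_Ico, ← smul_eq_mul]
    exact card_nsmul_le_sum _ _ _ fun i hi =>
      le_max_of_le_left (by have := (mem_Ico.mp hi).1; omega)

theorem stmt8_general {V : Type*} [Fintype V] (T : SimpleGraph V)
    (hT : T.IsTree) :
    tau T ≤ tau (SimpleGraph.pathGraph (Fintype.card V)) :=
  calc tau T
      ≤ ∑ i ∈ range (T.diam + 1), max i (T.diam - i) +
          (Fintype.card V - (T.diam + 1)) * T.diam := hT.tau_le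
    _ ≤ ∑ i ∈ range (Fintype.card V), max i (Fintype.card V - 1 - i) :=
        sum_range_max_add_mul_le hT.connected.diam_lt_card
    _ ≤ tau (pathGraph (Fintype.card V)) := sum_max_le_tau_pathGraph _

theorem stmt8 {V : Type*} [Fintype V] (T : SimpleGraph V)
    (hn : 4 ≤ Fintype.card V) (hT : T.IsTree) :
    tau T ≤ tau (SimpleGraph.pathGraph (Fintype.card V)) :=
  stmt8_general T hT
end

section
/- Let B be a connected bicyclic graph on n ≥ 5 vertices (a connected graph with exactly n+1 edges). Then τ(B) ≥ 2n − 1. -/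
/-! Every vertex has eccentricity at least 1, and a vertex of eccentricity 1 is adjacent to all
others. Two such vertices would already give degree sum at least `2(n - 1) + 2(n - 2)`, i.e. at
least `2n - 3 > n + 1` edges when `n ≥ 5`. So at most one vertex has eccentricity 1 and all
others have eccentricity at least 2, whence `τ(B) ≥ 1 + 2(n - 1)`. -/

open SimpleGraph Finset

namespace SimpleGraph

variable {V : Type*} [Fintype V] {G : SimpleGraph V}

lemma one_le_ecc [Nontrivial V] (hG : G.Connected) (v : V) : 1 ≤ ecc G v := by
  obtain ⟨w, hw⟩ := exists_ne v
  exact (hG.pos_dist_of_ne hw.symm).trans_le (le_sup (mem_univ w))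

lemma isUniversal_of_ecc_eq_one (hG : G.Connected) {v : V} (hv : ecc G v = 1) :
    G.IsUniversal v := fun w hvw ↦
  dist_eq_one_iff_adj.mp <| le_antisymm (hv ▸ le_sup (mem_univ w)) (hG.pos_dist_of_ne hvw)

lemma two_mul_card_le_card_edgeFinset_add_three [DecidableEq V] [DecidableRel G.Adj] {u v : V}
    (huv : u ≠ v) (hu : G.IsUniversal u) (hv : G.IsUniversal v) :
    2 * Fintype.card V ≤ #G.edgeFinset + 3 := by
  have hdeg_u := (G.degree_eq_card_sub_one u).mpr hu
  have hdeg_v := (G.degree_eq_card_sub_one v).mpr hv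
  set R := (univ.erase u).erase v
  have hR : #R = Fintype.card V - 2 := by
    rw [card_erase_of_mem (mem_erase.mpr ⟨huv.symm, mem_univ v⟩), card_erase_of_mem (mem_univ u),
      card_univ]
    omega
  have hrest : 2 * #R ≤ ∑ w ∈ R, G.degree w := by
    rw [mul_comm, ← smul_eq_mul]
    refine card_nsmul_le_sum _ _ _ fun w hw ↦ ?_
    have hwv := ne_of_mem_erase hw
    have hwu := ne_of_mem_erase (mem_of_mem_erase hw)
    have : {u, v} ⊆ G.neighborFinset w := by
      simp [insert_subset_iff, (hu hwu.symm).symm, (hv hwv.symm).symm]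
    simpa [card_pair huv] using card_le_card this
  have hsum : ∑ w, G.degree w = G.degree u + (G.degree v + ∑ w ∈ R, G.degree w) := by
    rw [← add_sum_erase _ _ (mem_univ u),
      ← add_sum_erase _ _ (mem_erase.mpr ⟨huv.symm, mem_univ v⟩)]
  have := G.sum_degrees_eq_twice_card_edges
  have : 2 ≤ Fintype.card V := Fintype.one_lt_card_iff.mpr ⟨u, v, huv⟩
  omega

lemma card_filter_ecc_eq_one_le_one (hG : G.Connected) [DecidableRel G.Adj]
    (hE : #G.edgeFinset + 3 < 2 * Fintype.card V) : #{v | ecc G v = 1} ≤ 1 := by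
  classical
  refine card_le_one.mpr fun u hu v hv ↦ by_contra fun huv ↦ hE.not_ge ?_
  simp only [mem_filter, mem_univ, true_and] at hu hv
  exact two_mul_card_le_card_edgeFinset_add_three huv
    (isUniversal_of_ecc_eq_one hG hu) (isUniversal_of_ecc_eq_one hG hv)

end SimpleGraph

lemma Finset.two_mul_card_le_sum_add_card_filter_eq_one {ι : Type*} (s : Finset ι) (f : ι → ℕ)
    (hf : ∀ i ∈ s, 1 ≤ f i) : 2 * #s ≤ ∑ i ∈ s, f i + #{i ∈ s | f i = 1} := by
  rw [card_filter, ← sum_add_distrib, mul_comm, ← smul_eq_mul]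
  refine card_nsmul_le_sum _ _ _ fun i hi ↦ ?_
  have := hf i hi
  split_ifs <;> omega

theorem stmt14 {V : Type*} [Fintype V] (B : SimpleGraph V)
    (hn : 5 ≤ Fintype.card V) (hconn : B.Connected)
    (hbi : B.edgeSet.ncard = Fintype.card V + 1) :
    2 * Fintype.card V - 1 ≤ tau B := by
  classical
  have : Nontrivial V := Fintype.one_lt_card_iff_nontrivial.mp (by omega)
  have hE : #B.edgeFinset = Fintype.card V + 1 := by
    rw [← hbi, ← Set.ncard_coe_finset, coe_edgeFinset]
  have hS := card_filter_ecc_eq_one_le_one hconn (by omega)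
  have hτ := two_mul_card_le_sum_add_card_filter_eq_one univ (ecc B) fun v _ ↦ one_le_ecc hconn v
  rw [card_univ] at hτ
  unfold tau
  omega
end
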